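/- arXiv:2102.06801 — 2 statements merged into one kernel-verified Lean document; each statement's English description precedes it below -/
import Mathlib

section
/- Let F be a differentiable, strictly increasing CDF on ℝ with density f = F', and let F̃ be another CDF with sup_x |F(x) − F̃(x)| ≤ B. Fix α ∈ (0,1) and suppose f(F^{-1}(α)) ≥ L > 0 and f ≥ L on a neighborhood of F^{-1}(α) of radius 2B/L. Then the generalized inverse quantiles satisfy |F^{-1}(α) − F̃^{-1}(α)| ≤ 2B/L, where F̃^{-1}(α) = inf{x : F̃(x) ≥ α}. -/
theorem stmt_6 (F Ftil : ℝ → ℝ) (hFd : Differentiable ℝ F) (hFm : StrictMono F)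
    (hFtilMono : Monotone Ftil)
    (f : ℝ → ℝ) (hf : f = deriv F)
    (B : ℝ) (hB : ∀ x, |F x - Ftil x| ≤ B)
    (α : ℝ) (hα : α ∈ Set.Ioo (0 : ℝ) 1)
    (x₀ : ℝ) (hx₀ : F x₀ = α)
    (L : ℝ) (hL : 0 < L) (hfx₀ : L ≤ f x₀)
    (hnbhd : ∀ x, |x - x₀| ≤ 2 * B / L → L ≤ f x) :
    |x₀ - sInf {x | α ≤ Ftil x}| ≤ 2 * B / L := by
  set δ := 2 * B / L with hδdef
  have hB0 : 0 ≤ B := le_trans (abs_nonneg _) (hB x₀)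
  have hδ0 : 0 ≤ δ := by positivity
  have hLδ : L * δ = 2 * B := by
    rw [hδdef]; field_simp
  clear_value δ
  have key : ∀ a b : ℝ, a < b → |a - x₀| ≤ δ → |b - x₀| ≤ δ →
      L * (b - a) ≤ F b - F a := by
    intro a b hab ha hb
    obtain ⟨c, hc, hderiv⟩ := exists_deriv_eq_slope F hab
      hFd.continuous.continuousOn hFd.differentiableOn
    have hcx : |c - x₀| ≤ δ := by
      rw [abs_le] at ha hb ⊢
      constructor <;> nlinarith [hc.1, hc.2]
    have hLc := hnbhd c hcx
    rw [hf, hderiv] at hLc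
    have := (le_div_iff₀ (sub_pos.mpr hab)).mp hLc
    linarith
  have hFlo : F (x₀ - δ) ≤ α - 2 * B := by
    rw [← hLδ]
    rcases eq_or_lt_of_le hδ0 with h | h
    · simp [← h, hx₀]
    · have := key (x₀ - δ) x₀ (by linarith) (by rw [abs_le]; constructor <;> linarith)
        (by simp [hδ0])
      rw [hx₀] at this
      linarith
  have hFhi : α + 2 * B ≤ F (x₀ + δ) := by
    rw [← hLδ]
    rcases eq_or_lt_of_le hδ0 with h | h
    · simp [← h, hx₀]
    · have := key x₀ (x₀ + δ) (by linarith) (by simp [hδ0])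
        (by rw [abs_le]; constructor <;> linarith)
      rw [hx₀] at this
      linarith
  have hmem : x₀ + δ ∈ {x | α ≤ Ftil x} := by
    have h1 := (abs_le.mp (hB (x₀ + δ))).2
    simp only [Set.mem_setOf_eq]
    linarith [hFhi]
  have hlb : ∀ x ∈ {x | α ≤ Ftil x}, x₀ - δ ≤ x := by
    intro x hx
    simp only [Set.mem_setOf_eq] at hx
    by_contra hcon
    push_neg at hcon
    have h1 : F x < F (x₀ - δ) := hFm hcon
    have h2 := (abs_le.mp (hB x)).1
    linarith [hFlo]
  have h1 : sInf {x | α ≤ Ftil x} ≤ x₀ + δ := csInf_le ⟨x₀ - δ, hlb⟩ hmem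
  have h2 : x₀ - δ ≤ sInf {x | α ≤ Ftil x} := le_csInf ⟨x₀ + δ, hmem⟩ hlb
  rw [abs_le]
  constructor <;> linarith
end

section
/- Let X be a chi-squared random variable with ν ≥ 1 degrees of freedom. For any ζ > 0, P(X/ν ≥ 1 + ζ) ≤ exp((ν/2)(log(1+ζ) − ζ)). -/
open ProbabilityTheory

/-! Chernoff's bound `P(X ≥ c) ≤ e^{-tc} E[e^{tX}]` for `0 ≤ t`, with the moment generating function of
the Gamma(a, r) law, `(r / (r - t))^a`: tilting its density by `e^{tx}` gives the Gamma(a, r - t)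
density up to that factor. For the chi-squared law (`a = ν/2`, `r = 1/2`) and `c = ν (1 + ζ)` the
choice `t = ζ / (2 (1 + ζ))` minimizes the bound, which then equals `(1 + ζ)^{ν/2} e^{-νζ/2}`. -/

open MeasureTheory Real Set ENNReal

lemma ofReal_exp_mul_mul_gammaPDF {a r t : ℝ} (hr : 0 ≤ r) (htr : t < r) (x : ℝ) :
    ENNReal.ofReal (exp (t * x)) * gammaPDF a r x
      = ENNReal.ofReal ((r / (r - t)) ^ a) * gammaPDF a (r - t) x := by
  rcases lt_or_ge x 0 with hx | hx
  · simp only [gammaPDF_of_neg hx, mul_zero]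
  rw [gammaPDF_of_nonneg hx, gammaPDF_of_nonneg hx, ← ENNReal.ofReal_mul (exp_nonneg _),
    ← ENNReal.ofReal_mul (by positivity)]
  congr 1
  have hrt : 0 < r - t := sub_pos.2 htr
  have hpow : (r / (r - t)) ^ a * (r - t) ^ a = r ^ a := by
    rw [← mul_rpow (by positivity) hrt.le, div_mul_cancel₀ _ hrt.ne']
  have hexp : exp (t * x) * exp (-(r * x)) = exp (-((r - t) * x)) := by
    rw [← exp_add]; ring_nf
  rw [← hpow, ← hexp]
  ring

lemma lintegral_exp_mul_gammaMeasure {a r t : ℝ} (ha : 0 < a) (hr : 0 ≤ r) (htr : t < r) :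
    ∫⁻ x, ENNReal.ofReal (exp (t * x)) ∂gammaMeasure a r = ENNReal.ofReal ((r / (r - t)) ^ a) := by
  rw [gammaMeasure, lintegral_withDensity_eq_lintegral_mul (f := gammaPDF a r) _
    (measurable_gammaPDFReal a r).ennreal_ofReal (by fun_prop)]
  simp only [Pi.mul_apply, mul_comm (gammaPDF a r _), ofReal_exp_mul_mul_gammaPDF hr htr]
  rw [lintegral_const_mul (f := gammaPDF a (r - t)) _ (measurable_gammaPDFReal a _).ennreal_ofReal,
    lintegral_gammaPDF_eq_one ha (sub_pos.2 htr), mul_one]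

lemma measure_Ici_le_ofReal_exp_mul_lintegral (μ : Measure ℝ) {t : ℝ} (ht : 0 ≤ t) (c : ℝ) :
    μ (Ici c) ≤ ENNReal.ofReal (exp (-(t * c))) * ∫⁻ x, ENNReal.ofReal (exp (t * x)) ∂μ := by
  rw [← lintegral_const_mul _ (by fun_prop)]
  calc μ (Ici c) = ∫⁻ _ in Ici c, 1 ∂μ := (setLIntegral_one _).symm
    _ ≤ ∫⁻ x in Ici c, ENNReal.ofReal (exp (-(t * c))) * ENNReal.ofReal (exp (t * x)) ∂μ := by
      refine setLIntegral_mono (by fun_prop) fun x hx => ?_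
      rw [← ENNReal.ofReal_mul (exp_nonneg _), ← exp_add, ENNReal.one_le_ofReal, one_le_exp_iff]
      nlinarith [mem_Ici.1 hx]
    _ ≤ _ := setLIntegral_le_lintegral _ _

lemma gammaMeasure_Ici_le {a r t : ℝ} (ha : 0 < a) (ht : 0 ≤ t) (htr : t < r) (c : ℝ) :
    gammaMeasure a r (Ici c) ≤ ENNReal.ofReal (exp (-(t * c)) * (r / (r - t)) ^ a) := by
  rw [ENNReal.ofReal_mul (exp_nonneg _),
    ← lintegral_exp_mul_gammaMeasure ha (ht.trans htr.le) htr]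
  exact measure_Ici_le_ofReal_exp_mul_lintegral _ ht c

theorem stmt_9 (ν : ℕ) (hν : 1 ≤ ν) (ζ : ℝ) (hζ : 0 < ζ) :
    gammaMeasure ((ν : ℝ) / 2) (1 / 2) {x | 1 + ζ ≤ x / (ν : ℝ)}
    ≤ ENNReal.ofReal (Real.exp (((ν : ℝ) / 2) * (Real.log (1 + ζ) - ζ))) := by
  have hν0 : (0 : ℝ) < ν := by exact_mod_cast hν
  have h1ζ : 0 < 1 + ζ := by linarith
  have hset : {x : ℝ | 1 + ζ ≤ x / ν} = Ici (ν * (1 + ζ)) := by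
    ext x
    rw [mem_ofPred_eq, mem_Ici, le_div_iff₀ hν0, mul_comm]
  have ht : 0 ≤ ζ / (2 * (1 + ζ)) := by positivity
  have htr : ζ / (2 * (1 + ζ)) < 1 / 2 := by
    rw [div_lt_iff₀ (by positivity)]; linarith
  have hratio : (1 / 2) / (1 / 2 - ζ / (2 * (1 + ζ))) = 1 + ζ := by
    field_simp; ring
  have htc : ζ / (2 * (1 + ζ)) * (ν * (1 + ζ)) = ν / 2 * ζ := by
    field_simp
  rw [hset]
  calc gammaMeasure (ν / 2) (1 / 2) (Ici (ν * (1 + ζ)))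
      ≤ ENNReal.ofReal (exp (-(ζ / (2 * (1 + ζ)) * (ν * (1 + ζ))))
          * ((1 / 2) / (1 / 2 - ζ / (2 * (1 + ζ)))) ^ ((ν : ℝ) / 2)) :=
        gammaMeasure_Ici_le (by positivity) ht htr _
    _ = ENNReal.ofReal (exp ((ν : ℝ) / 2 * (Real.log (1 + ζ) - ζ))) := by
        rw [hratio, htc, rpow_def_of_pos h1ζ, ← exp_add]
        ring_nf
end
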